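/- Let X₁,...,Xₙ be i.i.d. from an absolutely continuous distribution F with support contained in (0,1), and let U₁,...,Uₙ = F(X₁),...,F(Xₙ). Suppose that almost surely F(X₍ₙ₎/r) < F(X₍ₙ₎)/r and F(X₍₁₎) < r·F((X₍₁₎+r-1)/r) + 1 - r, where X₍₁₎, X₍ₙ₎ are the sample minimum and maximum. Then the domination number of the PICD built from X₁,...,Xₙ with parameters (r,c) is stochastically smaller than the domination number of the PICD built from U₁,...,Uₙ with parameters (r,F(c)). -/

import Mathlib

open Set MeasureTheory

/-- The parameterized proximity region on `(0,1)`. -/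
noncomputable def N01 (r c x : ℝ) : Set ℝ :=
  if x < c then Set.Ioo 0 (min 1 (r * x)) else Set.Ioo (max 0 (1 - r * (1 - x))) 1

/-- The domination number of the digraph on vertices `X 0, …, X (n-1)` where `u` dominates
itself and every vertex lying in `N u`. -/
noncomputable def domNum (n : ℕ) (X : Fin n → ℝ) (N : ℝ → Set ℝ) : ℕ :=
  sInf {k | ∃ S : Finset (Fin n), S.card = k ∧
    ∀ j, ∃ i ∈ S, X j = X i ∨ X j ∈ N (X i)}

/-! Almost surely every sample point lies in `(0,1)`, so both domination numbers are `1` or `2`: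
the largest point below `c` dominates all points to its left and the smallest point at or above
`c` all points to its right. It therefore suffices that, almost surely, whenever `F(Xᵢ)`
dominates the whole `U`-sample, `Xᵢ` dominates the whole `X`-sample. If `F(Xᵢ) < F(c)`, then
`F(X₍ₙ₎) ≤ r F(Xᵢ)`, and the hypothesis `F(X₍ₙ₎/r) < F(X₍ₙ₎)/r` with monotonicity of `F` gives
`X₍ₙ₎ < r Xᵢ`; the case `F(Xᵢ) ≥ F(c)` is symmetric, with `X₍₁₎`. Since `μ` has no atoms, almost
surely no sample point below `c` has `F(Xᵢ) = F(c)`, so `F(Xᵢ) < F(c)` exactly when `Xᵢ < c`. -/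

open ProbabilityTheory

def Dominates (N : ℝ → Set ℝ) (u v : ℝ) : Prop := v = u ∨ v ∈ N u

section DominationNumber

variable {n : ℕ} {X : Fin n → ℝ} {N : ℝ → Set ℝ}

theorem domNum_le_card {S : Finset (Fin n)} (hS : ∀ j, ∃ i ∈ S, Dominates N (X i) (X j)) :
    domNum n X N ≤ S.card :=
  Nat.sInf_le ⟨S, rfl, hS⟩

theorem exists_card_eq_domNum :
    ∃ S : Finset (Fin n), S.card = domNum n X N ∧ ∀ j, ∃ i ∈ S, Dominates N (X i) (X j) :=
  Nat.sInf_mem (s := {k | ∃ S : Finset (Fin n), S.card = k ∧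
    ∀ j, ∃ i ∈ S, Dominates N (X i) (X j)})
    ⟨n, Finset.univ, by simp, fun j => ⟨j, Finset.mem_univ j, Or.inl rfl⟩⟩

theorem one_le_domNum (hn : 1 ≤ n) : 1 ≤ domNum n X N := by
  obtain ⟨S, hS, hdom⟩ := exists_card_eq_domNum (X := X) (N := N)
  obtain ⟨i, hi, -⟩ := hdom ⟨0, hn⟩
  exact hS ▸ Finset.card_pos.2 ⟨i, hi⟩

theorem domNum_le_one_iff (hn : 1 ≤ n) :
    domNum n X N ≤ 1 ↔ ∃ i, ∀ j, Dominates N (X i) (X j) := by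
  have : Nonempty (Fin n) := ⟨⟨0, hn⟩⟩
  refine ⟨fun h => ?_, fun ⟨i, hi⟩ => domNum_le_card (S := {i}) fun j => ⟨i, by simp, hi j⟩⟩
  obtain ⟨S, hS, hdom⟩ := exists_card_eq_domNum (X := X) (N := N)
  obtain ⟨i, hSi⟩ := Finset.card_le_one_iff_subset_singleton.1 (hS.trans_le h)
  refine ⟨i, fun j => ?_⟩
  obtain ⟨i', hi', h⟩ := hdom j
  rwa [Finset.mem_singleton.1 (hSi hi')] at h

end DominationNumber

theorem Finset.exists_subset_card_le_one_forall_le {ι α : Type*} [LinearOrder α]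
    (s : Finset ι) (f : ι → α) : ∃ t ⊆ s, t.card ≤ 1 ∧ ∀ j ∈ s, ∃ i ∈ t, f j ≤ f i := by
  rcases s.eq_empty_or_nonempty with rfl | hs
  · exact ⟨∅, subset_rfl, by simp, by simp⟩
  · obtain ⟨i, hi, hmax⟩ := s.exists_max_image f hs
    exact ⟨{i}, by simpa, by simp, fun j hj => ⟨i, mem_singleton_self i, hmax j hj⟩⟩

section ProximityRegion

variable {r c x y : ℝ}

theorem dominates_N01_of_lt_mul (hy : y ∈ Ioo 0 1) (hxc : x < c) (h : y < r * x) :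
    Dominates (N01 r c) x y := by
  right
  rw [N01, if_pos hxc]
  exact ⟨hy.1, lt_min hy.2 h⟩

theorem dominates_N01_of_sub_lt (hy : y ∈ Ioo 0 1) (hcx : c ≤ x) (h : 1 - r * (1 - x) < y) :
    Dominates (N01 r c) x y := by
  right
  rw [N01, if_neg hcx.not_gt]
  exact ⟨max_lt hy.1 h, hy.2⟩

theorem dominates_N01_of_le_of_lt (hr : 1 ≤ r) (hy : y ∈ Ioo 0 1) (hx : 0 < x) (hxc : x < c)
    (hyx : y ≤ x) : Dominates (N01 r c) x y := by
  rcases hyx.eq_or_lt with rfl | hlt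
  · exact Or.inl rfl
  · exact dominates_N01_of_lt_mul hy hxc (by nlinarith)

theorem dominates_N01_of_ge_of_le (hr : 1 ≤ r) (hy : y ∈ Ioo 0 1) (hx : x < 1) (hcx : c ≤ x)
    (hxy : x ≤ y) : Dominates (N01 r c) x y := by
  rcases hxy.eq_or_lt with rfl | hlt
  · exact Or.inl rfl
  · exact dominates_N01_of_sub_lt hy hcx (by nlinarith)

theorem le_mul_of_dominates_N01_of_lt (hr : 1 ≤ r) (hx : 0 ≤ x) (hxc : x < c)
    (h : Dominates (N01 r c) x y) : y ≤ r * x := by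
  rcases h with rfl | h
  · nlinarith
  · rw [N01, if_pos hxc] at h
    exact h.2.le.trans (min_le_right _ _)

theorem le_of_dominates_N01_of_ge (hr : 1 ≤ r) (hx : x ≤ 1) (hcx : c ≤ x)
    (h : Dominates (N01 r c) x y) : 1 - r * (1 - x) ≤ y := by
  rcases h with rfl | h
  · nlinarith
  · rw [N01, if_neg hcx.not_gt] at h
    exact (le_max_right _ _).trans h.1.le

theorem domNum_N01_le_two {n : ℕ} (hr : 1 ≤ r) {X : Fin n → ℝ} (hX : ∀ i, X i ∈ Ioo 0 1) :
    domNum n X (N01 r c) ≤ 2 := by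
  classical
  obtain ⟨A, hA, hA1, hleft⟩ :=
    (Finset.univ.filter (X · < c)).exists_subset_card_le_one_forall_le X
  obtain ⟨B, hB, hB1, hright⟩ :=
    (Finset.univ.filter (c ≤ X ·)).exists_subset_card_le_one_forall_le (OrderDual.toDual ∘ X)
  refine (domNum_le_card (S := A ∪ B) fun j => ?_).trans
    ((Finset.card_union_le A B).trans (by omega))
  rcases lt_or_ge (X j) c with hj | hj
  · obtain ⟨i, hi, hji⟩ := hleft j (by simpa using hj)
    have hic : X i < c := by simpa using hA hi
    exact ⟨i, Finset.mem_union_left B hi,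
      dominates_N01_of_le_of_lt hr (hX j) (hX i).1 hic hji⟩
  · obtain ⟨i, hi, hij⟩ := hright j (by simpa using hj)
    have hci : c ≤ X i := by simpa using hB hi
    exact ⟨i, Finset.mem_union_right A hi,
      dominates_N01_of_ge_of_le hr (hX j) (hX i).2 hci hij⟩

end ProximityRegion

section Transfer

variable {F : ℝ → ℝ} {r c x m M : ℝ}

theorem lt_mul_of_le_mul_map (hF : Monotone F) (hr : 0 < r) (hM : F (M / r) < F M / r)
    (h : F M ≤ r * F x) : M < r * x :=
  (div_lt_iff₀' hr).1 (hF.reflect_lt (hM.trans_le ((div_le_iff₀' hr).2 h)))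

theorem sub_lt_of_map_le (hF : Monotone F) (hr : 0 < r)
    (hm : F m < r * F ((m + r - 1) / r) + 1 - r) (h : 1 - r * (1 - F x) ≤ F m) :
    1 - r * (1 - x) < m := by
  have hlt : F x < F ((m + r - 1) / r) := lt_of_mul_lt_mul_left (by linarith) hr.le
  have := (lt_div_iff₀' hr).1 (hF.reflect_lt hlt)
  linarith

theorem dominates_of_map_dominates {n : ℕ} (hF : Monotone F) (hF01 : ∀ x, F x ∈ Icc 0 1)
    (hr : 1 ≤ r) {X : Fin n → ℝ} (hX : ∀ j, X j ∈ Ioo 0 1)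
    (hmax : F ((⨆ j, X j) / r) < F (⨆ j, X j) / r)
    (hmin : F (⨅ j, X j) < r * F (((⨅ j, X j) + r - 1) / r) + 1 - r)
    (hc : ∀ j, F (X j) = F c → c ≤ X j) {i : Fin n}
    (hi : ∀ j, Dominates (N01 r (F c)) (F (X i)) (F (X j))) :
    ∀ j, Dominates (N01 r c) (X i) (X j) := by
  have : Nonempty (Fin n) := ⟨i⟩
  have hr0 : 0 < r := by linarith
  obtain ⟨k, hk⟩ := exists_eq_ciSup_of_finite (f := X)
  obtain ⟨k', hk'⟩ := exists_eq_ciInf_of_finite (f := X)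
  rcases lt_or_ge (F (X i)) (F c) with hlt | hge
  · have hM : ⨆ j, X j < r * X i := lt_mul_of_le_mul_map hF hr0 hmax
      (hk ▸ le_mul_of_dominates_N01_of_lt hr (hF01 _).1 hlt (hi k))
    intro j
    exact dominates_N01_of_lt_mul (hX j) (hF.reflect_lt hlt)
      ((le_ciSup (Finite.bddAbove_range X) j).trans_lt hM)
  · have hci : c ≤ X i := by
      by_contra! h
      exact h.not_ge (hc i (le_antisymm (hF h.le) hge))
    have hm : 1 - r * (1 - X i) < ⨅ j, X j := sub_lt_of_map_le hF hr0 hmin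
      (hk' ▸ le_of_dominates_N01_of_ge hr (hF01 _).2 hge (hi k'))
    intro j
    exact dominates_N01_of_sub_lt (hX j) hci (hm.trans_le (ciInf_le (Finite.bddBelow_range X) j))

theorem domNum_N01_le_domNum_map {n : ℕ} (hn : 1 ≤ n) (hF : Monotone F)
    (hF01 : ∀ x, F x ∈ Icc 0 1) (hr : 1 ≤ r) {X : Fin n → ℝ} (hX : ∀ j, X j ∈ Ioo 0 1)
    (hmax : F ((⨆ j, X j) / r) < F (⨆ j, X j) / r)
    (hmin : F (⨅ j, X j) < r * F (((⨅ j, X j) + r - 1) / r) + 1 - r)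
    (hc : ∀ j, F (X j) = F c → c ≤ X j) :
    domNum n X (N01 r c) ≤ domNum n (fun j => F (X j)) (N01 r (F c)) := by
  have h1 := one_le_domNum (X := fun j => F (X j)) (N := N01 r (F c)) hn
  have h2 := domNum_N01_le_two (c := c) hr hX
  by_contra! hlt
  obtain ⟨i, hi⟩ := (domNum_le_one_iff (X := fun j => F (X j)) (N := N01 r (F c)) hn).1
    (by omega)
  have := (domNum_le_one_iff hn).2 ⟨i, dominates_of_map_dominates hF hF01 hr hX hmax hmin hc hi⟩
  omega

end Transfer

theorem ProbabilityTheory.measure_Ioc_eq_zero_of_cdf_eq {μ : Measure ℝ} [IsProbabilityMeasure μ]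
    {a b : ℝ} (h : cdf μ a = cdf μ b) : μ (Ioc a b) = 0 := by
  rw [← measure_cdf μ, StieltjesFunction.measure_Ioc, h, sub_self, ENNReal.ofReal_zero]

theorem ProbabilityTheory.ae_le_of_cdf_eq (μ : Measure ℝ) [IsProbabilityMeasure μ]
    [NullSingletonClass μ] (c : ℝ) : ∀ᵐ x ∂μ, cdf μ x = cdf μ c → c ≤ x := by
  have hnull : ∀ᵐ x ∂μ, x ∈ {x | x < c ∧ cdf μ x = cdf μ c} → False :=
    -- `μ` has no mass between two points of the level set, and no atoms at its ends.
    ae_of_mem_of_ae_of_mem_inter_Ioo fun a _ ha _ _ => by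
      rw [ae_iff]
      refine measure_mono_null (fun x hx => ?_) (measure_Ioc_eq_zero_of_cdf_eq ha.2)
      simp only [mem_ofPred_eq, imp_false, not_not] at hx
      exact ⟨hx.2.1, hx.1.1.le⟩
  filter_upwards [hnull] with x hx heq
  exact not_lt.1 fun hlt => hx ⟨hlt, heq⟩

theorem picd_domNum_stochastic_order_general (μ : Measure ℝ) [IsProbabilityMeasure μ]
    (hac : μ ≪ volume) (hsupp : μ (Set.Ioo 0 1) = 1)
    (r c : ℝ) (hr : 1 ≤ r) (n : ℕ) (hn : 1 ≤ n)
    (F : ℝ → ℝ) (hF : F = fun x => (μ (Set.Iic x)).toReal)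
    (has : ∀ᵐ X : Fin n → ℝ ∂(Measure.pi fun _ => μ),
      F ((⨆ i, X i) / r) < F (⨆ i, X i) / r ∧
      F (⨅ i, X i) < r * F (((⨅ i, X i) + r - 1) / r) + 1 - r) :
    ∀ t : ℕ,
      (Measure.pi fun _ : Fin n => μ) {X | t < domNum n X (N01 r c)} ≤
        (Measure.pi fun _ : Fin n => μ)
          {X | t < domNum n (fun i => F (X i)) (N01 r (F c))} := by
  intro t
  obtain rfl : F = cdf μ := by
    ext x
    rw [hF, cdf_eq_real, measureReal_def]
  have : NullSingletonClass μ := ⟨fun x => hac Real.volume_singleton⟩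
  have hpt : ∀ᵐ x ∂μ, x ∈ Ioo 0 1 ∧ (cdf μ x = cdf μ c → c ≤ x) :=
    (ae_iff.2 ((prob_compl_eq_zero_iff measurableSet_Ioo).2 hsupp)).and (ae_le_of_cdf_eq μ c)
  have hgood : ∀ᵐ X : Fin n → ℝ ∂(Measure.pi fun _ => μ),
      ∀ i, X i ∈ Ioo 0 1 ∧ (cdf μ (X i) = cdf μ c → c ≤ X i) :=
    ae_all_iff.2 fun i => (Measure.tendsto_eval_ae_ae (μ := fun _ => μ) (i := i)).eventually hpt
  refine measure_mono_ae ?_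
  filter_upwards [has, hgood] with X hext hX ht
  exact ht.trans_le (domNum_N01_le_domNum_map hn (monotone_cdf μ)
    (fun x => ⟨cdf_nonneg μ x, cdf_le_one μ x⟩) hr (fun i => (hX i).1) hext.1 hext.2
    (fun i => (hX i).2))

/-- Stochastic ordering: Let `X₁,…,Xₙ` be i.i.d. from an absolutely
continuous `μ` supported in `(0,1)` with cdf `F`, and `Uᵢ = F(Xᵢ)`.  If almost surely
`F(X₍ₙ₎/r) < F(X₍ₙ₎)/r` and `F(X₍₁₎) < r·F((X₍₁₎+r-1)/r) + 1 - r`, then the domination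
number of the PICD of the `X`-sample with parameters `(r,c)` is stochastically smaller than
that of the `U`-sample with parameters `(r,F(c))`. -/
theorem picd_domNum_stochastic_order (μ : Measure ℝ) [IsProbabilityMeasure μ]
    (hac : μ ≪ volume) (hsupp : μ (Set.Ioo 0 1) = 1)
    (r c : ℝ) (hr : 1 ≤ r) (hc : c ∈ Set.Ioo (0:ℝ) 1) (n : ℕ) (hn : 1 ≤ n)
    (F : ℝ → ℝ) (hF : F = fun x => (μ (Set.Iic x)).toReal)
    (has : ∀ᵐ X : Fin n → ℝ ∂(Measure.pi fun _ => μ),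
      F ((⨆ i, X i) / r) < F (⨆ i, X i) / r ∧
      F (⨅ i, X i) < r * F (((⨅ i, X i) + r - 1) / r) + 1 - r) :
    ∀ t : ℕ,
      (Measure.pi fun _ : Fin n => μ) {X | t < domNum n X (N01 r c)} ≤
        (Measure.pi fun _ : Fin n => μ)
          {X | t < domNum n (fun i => F (X i)) (N01 r (F c))} :=
  picd_domNum_stochastic_order_general μ hac hsupp r c hr n hn F hF has
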